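/- Let N be standard normal, x₀ < 0, λ > 0. Then lim_{σ→0} P(N > (|x₀|/σ)√(2λ/(1 - σ²e^{-2λt})) | N > (|x₀|/σ)√(2λ)) = exp(-x₀²λ e^{-2λt}) for every t ∈ ℝ, and the right-hand side, as a function of t, is the distribution function of (Z + log(x₀²λ))/(2λ) where Z is standard Gumbel. -/

import Mathlib

/-!
For the standard normal density `φ`, the Mills-ratio bounds
`x / (x² + 1) · φ(x) ≤ P(N > x) ≤ φ(x) / x` give `P(N > x) ~ φ(x) / x` as `x → ∞`. Hence for thresholds `a, b → ∞` with `b / a → 1` and `a² - b² → d`, the ratio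
`P(N > a) / P(N > b)` tends to `exp (-d / 2)`. Here `b = |x₀| √(2λ) / σ` and
`a = b / √(1 - σ² e^{-2λt}) ≥ b`, so the event `N > a` lies inside `N > b` and
`a² - b² = 2λ x₀² e^{-2λt} / (1 - σ² e^{-2λt}) → 2λ x₀² e^{-2λt}`.
The Gumbel part is the change of variables `Z ≤ 2λt - log (x₀² λ)`.
-/

open MeasureTheory ProbabilityTheory Filter
open Real Set Asymptotics Topology

lemma integrable_exp_neg_sq_div_two : Integrable fun y : ℝ => exp (-y ^ 2 / 2) := by
  convert integrable_exp_neg_mul_sq (b := 1 / 2) (by norm_num) using 3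
  ring

lemma integrable_mul_exp_neg_sq_div_two : Integrable fun y : ℝ => y * exp (-y ^ 2 / 2) := by
  convert integrable_mul_exp_neg_mul_sq (b := 1 / 2) (by norm_num) using 4
  ring

lemma tendsto_exp_neg_sq_div_two_atTop : Tendsto (fun y : ℝ => exp (-y ^ 2 / 2)) atTop (𝓝 0) := by
  refine tendsto_exp_atBot.comp ?_
  simpa [neg_div] using (tendsto_pow_atTop two_ne_zero).atTop_div_const two_pos

lemma hasDerivAt_exp_neg_sq_div_two (y : ℝ) :
    HasDerivAt (fun y : ℝ => exp (-y ^ 2 / 2)) (-y * exp (-y ^ 2 / 2)) y := by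
  have h : HasDerivAt (fun y : ℝ => -y ^ 2 / 2) (-y) y := by
    simpa [neg_div] using ((hasDerivAt_pow 2 y).div_const 2).fun_neg
  simpa [mul_comm] using h.exp

lemma integral_Ioi_mul_exp_neg_sq_div_two (x : ℝ) :
    ∫ y in Ioi x, y * exp (-y ^ 2 / 2) = exp (-x ^ 2 / 2) := by
  rw [integral_Ioi_of_hasDerivAt_of_tendsto' (f := fun y => -exp (-y ^ 2 / 2))
    (fun y _ => by simpa using (hasDerivAt_exp_neg_sq_div_two y).fun_neg)
    integrable_mul_exp_neg_sq_div_two.integrableOn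
    (by simpa using tendsto_exp_neg_sq_div_two_atTop.neg)]
  ring

lemma integral_Ioi_exp_neg_sq_div_two_le {x : ℝ} (hx : 0 < x) :
    ∫ y in Ioi x, exp (-y ^ 2 / 2) ≤ exp (-x ^ 2 / 2) / x := by
  rw [← integral_Ioi_mul_exp_neg_sq_div_two, le_div_iff₀ hx, ← integral_mul_const]
  refine setIntegral_mono_on (integrable_exp_neg_sq_div_two.mul_const x).integrableOn
    integrable_mul_exp_neg_sq_div_two.integrableOn measurableSet_Ioi fun y hy => ?_
  rw [mul_comm]
  exact mul_le_mul_of_nonneg_right (le_of_lt hy) (exp_pos _).le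

lemma hasDerivAt_div_sq_add_one_mul_exp_neg_sq_div_two (y : ℝ) :
    HasDerivAt (fun y : ℝ => y / (y ^ 2 + 1) * exp (-y ^ 2 / 2))
      ((2 / (y ^ 2 + 1) ^ 2 - 1) * exp (-y ^ 2 / 2)) y := by
  have hpos : y ^ 2 + 1 ≠ 0 := by positivity
  have h := ((hasDerivAt_id y).fun_div ((hasDerivAt_pow 2 y).add_const 1) hpos).fun_mul
    (hasDerivAt_exp_neg_sq_div_two y)
  refine h.congr_deriv ?_
  simp only [id, Nat.cast_ofNat]
  field_simp
  ring

lemma tendsto_div_sq_add_one_mul_exp_neg_sq_div_two_atTop :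
    Tendsto (fun y : ℝ => y / (y ^ 2 + 1) * exp (-y ^ 2 / 2)) atTop (𝓝 0) := by
  refine tendsto_of_tendsto_of_tendsto_of_le_of_le' tendsto_const_nhds
    tendsto_exp_neg_sq_div_two_atTop ?_ ?_
  · filter_upwards [eventually_ge_atTop 0] with y hy
    positivity
  · filter_upwards [eventually_ge_atTop 0] with y hy
    refine mul_le_of_le_one_left (exp_pos _).le ((div_le_one (by positivity)).2 ?_)
    nlinarith [sq_nonneg (y - 1)]

lemma div_sq_add_one_mul_exp_le_integral_Ioi (x : ℝ) :
    x / (x ^ 2 + 1) * exp (-x ^ 2 / 2) ≤ ∫ y in Ioi x, exp (-y ^ 2 / 2) := by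
  set w : ℝ → ℝ := fun y => 1 - 2 / (y ^ 2 + 1) ^ 2
  have hw : ∀ y : ℝ, 0 ≤ 2 / (y ^ 2 + 1) ^ 2 ∧ 2 / (y ^ 2 + 1) ^ 2 ≤ 2 := fun y =>
    ⟨by positivity, div_le_self zero_le_two (one_le_pow₀ (by nlinarith [sq_nonneg y]))⟩
  have hint : Integrable fun y => w y * exp (-y ^ 2 / 2) := by
    refine integrable_exp_neg_sq_div_two.mono' (by fun_prop) (ae_of_all _ fun y => ?_)
    rw [norm_mul, Real.norm_of_nonneg (exp_pos _).le]
    refine mul_le_of_le_one_left (exp_pos _).le ?_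
    rw [Real.norm_eq_abs, abs_le]
    constructor <;> linarith [hw y]
  have hftc := integral_Ioi_of_hasDerivAt_of_tendsto' (a := x)
    (fun y _ => (hasDerivAt_div_sq_add_one_mul_exp_neg_sq_div_two y).fun_neg.congr_deriv
      (by ring))
    hint.integrableOn (by simpa using tendsto_div_sq_add_one_mul_exp_neg_sq_div_two_atTop.neg)
  calc x / (x ^ 2 + 1) * exp (-x ^ 2 / 2) = ∫ y in Ioi x, w y * exp (-y ^ 2 / 2) := by
        rw [hftc]; ring
    _ ≤ ∫ y in Ioi x, exp (-y ^ 2 / 2) :=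
        setIntegral_mono_on hint.integrableOn integrable_exp_neg_sq_div_two.integrableOn
          measurableSet_Ioi fun y _ => mul_le_of_le_one_left (exp_pos _).le (by linarith [hw y])

lemma integral_Ioi_exp_neg_sq_div_two_isEquivalent :
    (fun x => ∫ y in Ioi x, exp (-y ^ 2 / 2)) ~[atTop] fun x => exp (-x ^ 2 / 2) / x := by
  refine isEquivalent_of_tendsto_one ?_
  have hlower : Tendsto (fun x : ℝ => 1 - (x ^ 2 + 1)⁻¹) atTop (𝓝 1) := by
    simpa using tendsto_const_nhds.sub (tendsto_inv_atTop_zero.comp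
      (tendsto_atTop_add_const_right _ 1 (tendsto_pow_atTop (α := ℝ) two_ne_zero)))
  refine tendsto_of_tendsto_of_tendsto_of_le_of_le' hlower tendsto_const_nhds ?_ ?_
  all_goals filter_upwards [eventually_gt_atTop 0] with x hx
  · rw [Pi.div_apply, le_div_iff₀ (by positivity)]
    refine le_trans (le_of_eq ?_) (div_sq_add_one_mul_exp_le_integral_Ioi x)
    field_simp
    ring
  · rw [Pi.div_apply, div_le_one (by positivity)]
    exact integral_Ioi_exp_neg_sq_div_two_le hx

lemma gaussianReal_Ioi_toReal (x : ℝ) :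
    (gaussianReal 0 1 (Ioi x)).toReal = (√(2 * π))⁻¹ * ∫ y in Ioi x, exp (-y ^ 2 / 2) := by
  rw [gaussianReal_apply_eq_integral 0 one_ne_zero, ENNReal.toReal_ofReal
    (setIntegral_nonneg measurableSet_Ioi fun y _ => gaussianPDFReal_nonneg _ _ _),
    ← integral_const_mul]
  simp [gaussianPDFReal]

lemma tendsto_gaussianReal_Ioi_div_Ioi {α : Type*} {l : Filter α} {a b : α → ℝ} {d : ℝ}
    (ha : Tendsto a l atTop) (hb : Tendsto b l atTop) (hba : Tendsto (fun i => b i / a i) l (𝓝 1))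
    (hd : Tendsto (fun i => a i ^ 2 - b i ^ 2) l (𝓝 d)) :
    Tendsto (fun i => (gaussianReal 0 1 (Ioi (a i))).toReal / (gaussianReal 0 1 (Ioi (b i))).toReal)
      l (𝓝 (exp (-d / 2))) := by
  have hequiv := (integral_Ioi_exp_neg_sq_div_two_isEquivalent.comp_tendsto ha).div
    (integral_Ioi_exp_neg_sq_div_two_isEquivalent.comp_tendsto hb)
  have hlim : Tendsto (fun i => exp (-(a i ^ 2 - b i ^ 2) / 2) * (b i / a i)) l
      (𝓝 (exp (-d / 2))) := by
    simpa using ((continuous_exp.tendsto _).comp (hd.neg.div_const 2)).mul hba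
  refine (hequiv.symm.tendsto_nhds (hlim.congr' ?_)).congr fun i => ?_
  · filter_upwards [ha.eventually_gt_atTop 0, hb.eventually_gt_atTop 0] with i hai hbi
    simp only [Function.comp, Pi.div_apply]
    rw [show -(a i ^ 2 - b i ^ 2) / 2 = -a i ^ 2 / 2 - -b i ^ 2 / 2 by ring, exp_sub]
    field_simp
  · simp only [gaussianReal_Ioi_toReal, Function.comp, Pi.div_apply]
    exact (mul_div_mul_left _ _ (by positivity)).symm

lemma tendsto_one_sub_sq_mul_nhdsGT_zero (s : ℝ) :
    Tendsto (fun σ : ℝ => 1 - σ ^ 2 * s) (𝓝[>] 0) (𝓝 1) :=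
  ((continuous_const.sub ((continuous_pow 2).mul continuous_const)).tendsto' 0 1
    (by simp)).mono_left nhdsWithin_le_nhds

lemma tendsto_gaussianReal_Ioi_div_Ioi_scaled {c k : ℝ} (hc : 0 < c) (hk : 0 < k) (s : ℝ) :
    Tendsto (fun σ : ℝ =>
      (gaussianReal 0 1 (Ioi (c / σ * √(k / (1 - σ ^ 2 * s))))).toReal
        / (gaussianReal 0 1 (Ioi (c / σ * √k))).toReal)
      (𝓝[>] 0) (𝓝 (exp (-(c ^ 2 * k * s) / 2))) := by
  set u : ℝ → ℝ := fun σ => 1 - σ ^ 2 * s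
  set b : ℝ → ℝ := fun σ => c / σ * √k
  have hu : Tendsto u (𝓝[>] 0) (𝓝 1) := tendsto_one_sub_sq_mul_nhdsGT_zero s
  have hsqrt_u : Tendsto (fun σ => √(u σ)) (𝓝[>] 0) (𝓝 1) := by
    simpa using hu.sqrt
  have ha_eq : ∀ᶠ σ in 𝓝[>] 0, c / σ * √(k / u σ) = b σ / √(u σ) := by
    filter_upwards [hu.eventually_const_lt one_pos] with σ hσ
    rw [sqrt_div' k hσ.le, mul_div_assoc]
  have hb : Tendsto b (𝓝[>] 0) atTop :=
    (tendsto_inv_nhdsGT_zero.const_mul_atTop (by positivity : 0 < c * √k)).congr fun σ => by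
      simp only [b]; ring
  have ha : Tendsto (fun σ => c / σ * √(k / u σ)) (𝓝[>] 0) atTop := by
    refine (Tendsto.congr' ?_ (hb.atTop_mul_pos one_pos (by simpa using hsqrt_u.inv₀ one_ne_zero)))
    filter_upwards [ha_eq] with σ hσ
    rw [hσ, div_eq_mul_inv]
  have hba : Tendsto (fun σ => b σ / (c / σ * √(k / u σ))) (𝓝[>] 0) (𝓝 1) := by
    refine hsqrt_u.congr' ?_
    filter_upwards [ha_eq, self_mem_nhdsWithin, hu.eventually_const_lt one_pos] with σ hσ hσ0 hu0
    have : 0 < b σ := mul_pos (div_pos hc hσ0) (sqrt_pos.2 hk)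
    rw [hσ]
    field_simp
  have hd : Tendsto (fun σ => (c / σ * √(k / u σ)) ^ 2 - b σ ^ 2) (𝓝[>] 0) (𝓝 (c ^ 2 * k * s)) := by
    have hlim : Tendsto (fun σ => c ^ 2 * k * s / u σ) (𝓝[>] 0) (𝓝 (c ^ 2 * k * s / 1)) :=
      tendsto_const_nhds.div hu one_ne_zero
    rw [div_one] at hlim
    refine hlim.congr' ?_
    filter_upwards [self_mem_nhdsWithin, hu.eventually_const_lt one_pos] with σ hσ0 hu0
    have hσ0' : σ ≠ 0 := ne_of_gt hσ0
    simp only [b, mul_pow, div_pow, sq_sqrt hk.le, sq_sqrt (div_pos hk hu0).le]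
    field_simp
    ring
  exact tendsto_gaussianReal_Ioi_div_Ioi ha hb hba hd

lemma tendsto_gaussianReal_Ioi_inter_div_Ioi_scaled {c k s : ℝ} (hc : 0 < c) (hk : 0 < k)
    (hs : 0 ≤ s) :
    Tendsto (fun σ : ℝ =>
      (gaussianReal 0 1 (Ioi (c / σ * √(k / (1 - σ ^ 2 * s))) ∩ Ioi (c / σ * √k))).toReal
        / (gaussianReal 0 1 (Ioi (c / σ * √k))).toReal)
      (𝓝[>] 0) (𝓝 (exp (-(c ^ 2 * k * s) / 2))) := by
  have hu : ∀ᶠ σ : ℝ in 𝓝[>] 0, 0 < 1 - σ ^ 2 * s :=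
    (tendsto_one_sub_sq_mul_nhdsGT_zero s).eventually_const_lt one_pos
  refine (tendsto_gaussianReal_Ioi_div_Ioi_scaled hc hk s).congr' ?_
  filter_upwards [self_mem_nhdsWithin, hu] with σ hσ0 hu0
  have hσs : 0 ≤ σ ^ 2 * s := by positivity
  rw [Ioi_inter_Ioi, max_eq_left]
  exact mul_le_mul_of_nonneg_left (sqrt_le_sqrt (le_div_self hk.le hu0 (by linarith)))
    (div_pos hc hσ0).le

lemma measure_gumbel_add_log_div_le {Ω : Type*} [MeasurableSpace Ω] {μ : Measure Ω}
    {Z : Ω → ℝ} (hZ : ∀ x, μ {ω | Z ω ≤ x} = ENNReal.ofReal (exp (-exp (-x))))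
    {m κ : ℝ} (hm : 0 < m) (hκ : 0 < κ) (t : ℝ) :
    μ {ω | (Z ω + log m) / κ ≤ t} = ENNReal.ofReal (exp (-m * exp (-κ * t))) := by
  have hset : {ω | (Z ω + log m) / κ ≤ t} = {ω | Z ω ≤ κ * t - log m} := by
    ext ω
    show (Z ω + log m) / κ ≤ t ↔ Z ω ≤ κ * t - log m
    rw [div_le_iff₀ hκ, mul_comm, le_sub_iff_add_le]
  rw [hset, hZ, neg_sub, sub_eq_add_neg, exp_add, exp_log hm]
  simp only [neg_mul]

theorem gaussian_conditional_limit_is_gumbel_general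
    (lam x₀ : ℝ) (hlam : 0 < lam) (hx₀ : x₀ < 0)
    {Ω : Type*} [MeasurableSpace Ω] (μ : Measure Ω)
    (Z : Ω → ℝ)
    (hZ : ∀ x : ℝ, μ {ω | Z ω ≤ x} = ENNReal.ofReal (Real.exp (-Real.exp (-x)))) :
    (∀ t : ℝ,
      Tendsto
        (fun σ : ℝ =>
          (gaussianReal 0 1
              (Set.Ioi ((|x₀| / σ) * Real.sqrt (2 * lam / (1 - σ ^ 2 * Real.exp (-2 * lam * t))))
                ∩ Set.Ioi ((|x₀| / σ) * Real.sqrt (2 * lam)))).toReal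
            / (gaussianReal 0 1 (Set.Ioi ((|x₀| / σ) * Real.sqrt (2 * lam)))).toReal)
        (nhdsWithin 0 (Set.Ioi 0))
        (nhds (Real.exp (-(x₀ ^ 2) * lam * Real.exp (-2 * lam * t))))) ∧
      (∀ t : ℝ,
        μ {ω | (Z ω + Real.log (x₀ ^ 2 * lam)) / (2 * lam) ≤ t}
          = ENNReal.ofReal (Real.exp (-(x₀ ^ 2) * lam * Real.exp (-2 * lam * t)))) := by
  have h2lam : 0 < 2 * lam := by positivity
  refine ⟨fun t => ?_, fun t => ?_⟩
  · convert tendsto_gaussianReal_Ioi_inter_div_Ioi_scaled (abs_pos.2 hx₀.ne) h2lam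
      (exp_pos (-2 * lam * t)).le using 3
    rw [sq_abs]
    ring
  · have hm : 0 < x₀ ^ 2 * lam := mul_pos (sq_pos_of_neg hx₀) hlam
    convert measure_gumbel_add_log_div_le hZ hm h2lam t using 5 <;> ring

/-- For `N` standard normal, `x₀ < 0`, `λ > 0`:
`P(N > (|x₀|/σ)√(2λ/(1-σ²e^{-2λt})) | N > (|x₀|/σ)√(2λ)) → exp(-x₀²λe^{-2λt})`
as `σ → 0⁺`, for every `t`; and `t ↦ exp(-x₀²λe^{-2λt})` is the distribution
function of `(Z + log(x₀²λ))/(2λ)` where `Z` is a standard Gumbel variable. -/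
theorem gaussian_conditional_limit_is_gumbel
    (lam x₀ : ℝ) (hlam : 0 < lam) (hx₀ : x₀ < 0)
    {Ω : Type*} [MeasurableSpace Ω] (μ : Measure Ω) [IsProbabilityMeasure μ]
    (Z : Ω → ℝ)
    (hZ : ∀ x : ℝ, μ {ω | Z ω ≤ x} = ENNReal.ofReal (Real.exp (-Real.exp (-x)))) :
    (∀ t : ℝ,
      Tendsto
        (fun σ : ℝ =>
          (gaussianReal 0 1
              (Set.Ioi ((|x₀| / σ) * Real.sqrt (2 * lam / (1 - σ ^ 2 * Real.exp (-2 * lam * t))))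
                ∩ Set.Ioi ((|x₀| / σ) * Real.sqrt (2 * lam)))).toReal
            / (gaussianReal 0 1 (Set.Ioi ((|x₀| / σ) * Real.sqrt (2 * lam)))).toReal)
        (nhdsWithin 0 (Set.Ioi 0))
        (nhds (Real.exp (-(x₀ ^ 2) * lam * Real.exp (-2 * lam * t))))) ∧
      (∀ t : ℝ,
        μ {ω | (Z ω + Real.log (x₀ ^ 2 * lam)) / (2 * lam) ≤ t}
          = ENNReal.ofReal (Real.exp (-(x₀ ^ 2) * lam * Real.exp (-2 * lam * t)))) :=
  gaussian_conditional_limit_is_gumbel_general lam x₀ hlam hx₀ μ Z hZ
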